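/- Let X₁, …, Xₙ (n ≥ 2) be i.i.d. integrable real random variables. Then (X₁ + ⋯ + Xₙ)/n ≤_cx (X₁ + ⋯ + X_{n-1})/(n-1). -/

import Mathlib

/-!
Write `S = X₀ + ⋯ + X_{n-1}` and `T j = S - X j`. Since `∑ j, T j = (n - 1) • S`, the mean `S / n`
is the average of the leave-one-out means `T j / (n - 1)`, so Jensen's inequality gives
`φ (S / n) ≤ (1 / n) ∑ j, φ (T j / (n - 1))` pointwise. By independence and identical
distribution every `T j` has the law of `X₀ + ⋯ + X_{n-2}`; integrating gives the claim.
-/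

open MeasureTheory ProbabilityTheory Finset

/-- The convex order `X ≤_cx Y`. -/
def ConvexOrder {Ω : Type*} [MeasurableSpace Ω] (P : Measure Ω) (X Y : Ω → ℝ) : Prop :=
  ∀ φ : ℝ → ℝ, ConvexOn ℝ Set.univ φ →
    Integrable (fun ω => φ (X ω)) P → Integrable (fun ω => φ (Y ω)) P →
    ∫ ω, φ (X ω) ∂P ≤ ∫ ω, φ (Y ω) ∂P

theorem Finset.sum_sum_erase {ι M : Type*} [DecidableEq ι] [AddCommMonoid M] (s : Finset ι)
    (f : ι → M) : ∑ j ∈ s, ∑ i ∈ s.erase j, f i = (#s - 1) • ∑ i ∈ s, f i := by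
  rw [sum_comm' (t' := s) (s' := fun i => s.erase i) (by grind), smul_sum]
  refine sum_congr rfl fun i hi => ?_
  rw [sum_const, card_erase_of_mem hi]

theorem ConvexOn.map_sum_div_card_le {ι : Type*} [DecidableEq ι] {φ : ℝ → ℝ}
    (hφ : ConvexOn ℝ Set.univ φ) {s : Finset ι} (hs : 2 ≤ #s) (x : ι → ℝ) :
    φ ((∑ i ∈ s, x i) / #s) ≤
      (∑ j ∈ s, φ ((∑ i ∈ s.erase j, x i) / (#s - 1 : ℕ))) / #s := by
  have hm : (0 : ℝ) < #s := by norm_cast; omega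
  have hc : (0 : ℝ) < (#s - 1 : ℕ) := by norm_cast; omega
  have hmean : ∑ j ∈ s, (#s : ℝ)⁻¹ • ((∑ i ∈ s.erase j, x i) / (#s - 1 : ℕ))
      = (∑ i ∈ s, x i) / #s := by
    simp only [smul_eq_mul, ← mul_sum, ← sum_div, sum_sum_erase, nsmul_eq_mul]
    field_simp
  have hw : ∑ _j ∈ s, (#s : ℝ)⁻¹ = 1 := by
    rw [sum_const, nsmul_eq_mul]
    field_simp
  have := hφ.map_sum_le (p := fun j => (∑ i ∈ s.erase j, x i) / (#s - 1 : ℕ))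
    (fun _ _ => by positivity) hw (fun _ _ => Set.mem_univ _)
  rwa [hmean, ← smul_sum, smul_eq_mul, inv_mul_eq_div] at this

theorem ProbabilityTheory.iIndepFun.identDistrib_sum_of_card_eq {Ω ι E : Type*}
    [MeasurableSpace Ω] {P : Measure Ω} [AddCommMonoid E] [MeasurableSpace E] [MeasurableAdd₂ E]
    {X : ι → Ω → E} (hXm : ∀ i, Measurable (X i)) (hindep : iIndepFun X P)
    (hident : ∀ i j, IdentDistrib (X i) (X j) P P) {s t : Finset ι} (hst : #s = #t) :
    IdentDistrib (∑ i ∈ s, X i) (∑ i ∈ t, X i) P P := by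
  classical
  have := hindep.isProbabilityMeasure
  induction s using Finset.induction_on generalizing t with
  | empty =>
    rw [card_empty, eq_comm, card_eq_zero] at hst
    subst hst
    exact IdentDistrib.refl aemeasurable_const
  | insert a s ha ih =>
    obtain ⟨b, hb⟩ : t.Nonempty := by
      rw [← card_pos, ← hst]
      exact card_pos.mpr ⟨a, mem_insert_self a s⟩
    have hs : #s = #(t.erase b) := by
      rw [card_erase_of_mem hb, ← hst, card_insert_of_notMem ha, Nat.add_sub_cancel]
    rw [← insert_erase hb, sum_insert ha, sum_insert (notMem_erase b t)]
    exact ((hident a b).prodMk (ih hs) (hindep.indepFun_finsetSum_of_notMem hXm ha).symm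
      (hindep.indepFun_finsetSum_of_notMem hXm (notMem_erase b t)).symm).comp measurable_add

theorem stmt_9_general {Ω : Type*} [MeasurableSpace Ω] (P : Measure Ω)
    {n : ℕ} (hn : 2 ≤ n) (X : ℕ → Ω → ℝ) (hXm : ∀ i, Measurable (X i))
    (hindep : ProbabilityTheory.iIndepFun X P)
    (hident : ∀ i, Measure.map (X i) P = Measure.map (X 0) P) :
    ConvexOrder P (fun ω => (∑ i ∈ Finset.range n, X i ω) / n)
      (fun ω => (∑ i ∈ Finset.range (n - 1), X i ω) / (n - 1 : ℕ)) := by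
  intro φ hφ hX hY
  have hiid : ∀ i j, IdentDistrib (X i) (X j) P P := fun i j =>
    ⟨(hXm i).aemeasurable, (hXm j).aemeasurable, by rw [hident i, hident j]⟩
  have hφc : Continuous φ := continuousOn_univ.mp (hφ.continuousOn isOpen_univ)
  have hT : ∀ j ∈ range n,
      IdentDistrib (fun ω => φ ((∑ i ∈ (range n).erase j, X i ω) / (n - 1 : ℕ)))
        (fun ω => φ ((∑ i ∈ range (n - 1), X i ω) / (n - 1 : ℕ))) P P := fun j hj => by
    have := (hindep.identDistrib_sum_of_card_eq hXm hiid (s := (range n).erase j)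
      (t := range (n - 1)) (by simp [card_erase_of_mem hj])).comp
      (hφc.comp (continuous_id.div_const ((n - 1 : ℕ) : ℝ))).measurable
    simpa only [Function.comp_def, Finset.sum_apply, id_eq] using this
  have hTint j hj := (hT j hj).integrable_iff.mpr hY
  calc ∫ ω, φ ((∑ i ∈ range n, X i ω) / n) ∂P
      ≤ ∫ ω, (∑ j ∈ range n, φ ((∑ i ∈ (range n).erase j, X i ω) / (n - 1 : ℕ))) / n ∂P :=
        integral_mono hX ((integrable_finsetSum _ hTint).div_const _) fun ω => by
          simpa only [card_range] using hφ.map_sum_div_card_le (s := range n) (by simpa) (X · ω)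
    _ = (∑ j ∈ range n, ∫ ω, φ ((∑ i ∈ (range n).erase j, X i ω) / (n - 1 : ℕ)) ∂P) / n := by
        rw [integral_div, integral_finsetSum _ hTint]
    _ = ∫ ω, φ ((∑ i ∈ range (n - 1), X i ω) / (n - 1 : ℕ)) ∂P := by
        rw [sum_congr rfl fun j hj => (hT j hj).integral_eq, sum_const, card_range, nsmul_eq_mul]
        field_simp

theorem stmt_9 {Ω : Type*} [MeasurableSpace Ω] (P : Measure Ω) [IsProbabilityMeasure P]
    {n : ℕ} (hn : 2 ≤ n) (X : ℕ → Ω → ℝ) (hXm : ∀ i, Measurable (X i))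
    (hindep : ProbabilityTheory.iIndepFun X P)
    (hident : ∀ i, Measure.map (X i) P = Measure.map (X 0) P)
    (hint : ∀ i, Integrable (X i) P) :
    ConvexOrder P (fun ω => (∑ i ∈ Finset.range n, X i ω) / n)
      (fun ω => (∑ i ∈ Finset.range (n - 1), X i ω) / (n - 1 : ℕ)) :=
  stmt_9_general P hn X hXm hindep hident
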